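/- arXiv:0902.2180 — 8 statements merged into one kernel-verified Lean document; each statement's English description precedes it below -/
import Mathlib

section
/- Let X be a set, x₀ ∈ X, and M a submonoid of Self(X) such that the evaluation map Φ : M → X, u ↦ u(x₀), is a bijection. If u ∈ M is a bijective function, then its inverse function u⁻¹ also belongs to M. -/
/-!
Pick `w ∈ M` with `w x₀ = v x₀`. Then `u * w ∈ M` and `1 ∈ M` both send `x₀` to `x₀`, so injectivity
of evaluation at `x₀` forces `u * w = 1`; composing with the left inverse `v` of `u` gives `v = w`.
-/

theorem Function.End.eq_of_leftInverse_of_mul_eq_one {X : Type*} {u v w : Function.End X}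
    (hvu : ∀ x, v (u x) = x) (huw : u * w = 1) : v = w := by
  funext x
  calc v x = v ((u * w) x) := by rw [huw]; rfl
    _ = w x := hvu _

theorem stmt_3_general {X : Type*} (x₀ : X) (M : Submonoid (Function.End X))
    (hΦ : Function.Bijective (fun u : M => (u : Function.End X) x₀))
    (u : Function.End X) (hu : u ∈ M)
    (v : Function.End X) (hvu : ∀ x, v (u x) = x) (huv : ∀ x, u (v x) = x) :
    v ∈ M := by
  obtain ⟨w, hw⟩ := hΦ.2 (v x₀)
  have hw : (w : Function.End X) x₀ = v x₀ := hw
  have huw : (⟨u, hu⟩ * w : M) = 1 := by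
    apply hΦ.1
    show u ((w : Function.End X) x₀) = x₀
    rw [hw, huv]
  rw [Function.End.eq_of_leftInverse_of_mul_eq_one hvu (congrArg Subtype.val huw)]
  exact w.2

theorem stmt_3 {X : Type*} (x₀ : X) (M : Submonoid (Function.End X))
    (hΦ : Function.Bijective (fun u : M => (u : Function.End X) x₀))
    (u : Function.End X) (hu : u ∈ M) (hbij : Function.Bijective u)
    (v : Function.End X) (hvu : ∀ x, v (u x) = x) (huv : ∀ x, u (v x) = x) :
    v ∈ M :=
  stmt_3_general x₀ M hΦ u hu v hvu huv
end

section
/- Let X be a set, x₀ ∈ X, and M a submonoid of Self(X) such that the evaluation map Φ : M → X, u ↦ u(x₀), is a bijection. Then the monoid M is a group if and only if every element of M is a bijective function. -/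
/-!
Inverses in `Self(X)` are two-sided inverses of functions, so a group `M` consists of
bijections. Conversely, if `u ∈ M` is bijective, choose `v ∈ M` with `v x₀ = u⁻¹ x₀`;
then `u * v` and `1` agree at `x₀`, so `u * v = 1` by injectivity of the evaluation map,
and `v * u = 1` follows by cancelling the injective `u`.
-/

open Function

namespace Function.End

variable {X : Type*}

theorem bijective_of_mul_eq_one {u v : Function.End X} (huv : u * v = 1) (hvu : v * u = 1) :
    Bijective u :=
  bijective_iff_has_inverse.mpr ⟨v, congrFun hvu, congrFun huv⟩

theorem mul_eq_one_of_injective_of_mul_eq_one {u v : Function.End X} (hu : Injective u)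
    (huv : u * v = 1) : v * u = 1 :=
  funext fun x => hu (congrFun huv (u x))

theorem eq_of_apply_eq_of_mem {M : Submonoid (Function.End X)} {x₀ : X}
    (hΦ : Injective (fun u : M => (u : Function.End X) x₀)) {u v : Function.End X}
    (hu : u ∈ M) (hv : v ∈ M) (h : u x₀ = v x₀) : u = v :=
  congrArg Subtype.val (@hΦ ⟨u, hu⟩ ⟨v, hv⟩ h)

theorem exists_mem_mul_eq_one_of_surjective {M : Submonoid (Function.End X)} {x₀ : X}
    (hΦ : Bijective (fun u : M => (u : Function.End X) x₀)) {u : Function.End X}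
    (hu : u ∈ M) (hsurj : Surjective u) : ∃ v ∈ M, u * v = 1 := by
  obtain ⟨y, hy⟩ := hsurj x₀
  obtain ⟨⟨v, hv⟩, hvy : v x₀ = y⟩ := hΦ.2 y
  refine ⟨v, hv, eq_of_apply_eq_of_mem hΦ.1 (M.mul_mem hu hv) M.one_mem ?_⟩
  change u (v x₀) = x₀
  rw [hvy, hy]

end Function.End

theorem stmt_4 {X : Type*} (x₀ : X) (M : Submonoid (Function.End X))
    (hΦ : Function.Bijective (fun u : M => (u : Function.End X) x₀)) :
    (∀ u ∈ M, ∃ v ∈ M, u * v = 1 ∧ v * u = 1) ↔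
      (∀ u ∈ M, Function.Bijective u) := by
  refine ⟨fun h u hu => ?_, fun h u hu => ?_⟩
  · obtain ⟨v, -, huv, hvu⟩ := h u hu
    exact End.bijective_of_mul_eq_one huv hvu
  · obtain ⟨v, hv, huv⟩ := End.exists_mem_mul_eq_one_of_surjective hΦ hu (h u hu).2
    exact ⟨v, hv, huv, End.mul_eq_one_of_injective_of_mul_eq_one (h u hu).1 huv⟩
end

section
/- Let X be a set, x₀ ∈ X, and M a submonoid of Self(X) such that the evaluation map Φ : M → X, u ↦ u(x₀), is a bijection. Then M obeys the left cancellation law (u ∘ u₁ = u ∘ u₂ implies u₁ = u₂ for u, u₁, u₂ ∈ M) if and only if every element of M is an injective function. -/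
open Function

theorem Function.End.injective_mul_left {X : Type*} {u : Function.End X} (hu : Injective u) :
    Injective (u * ·) :=
  hu.comp_left

/-- Cancelling `u` in `u * u₁ = u * u₂` recovers `u₁ = u₂`, and evaluation at `x₀` separates the
products, so `u` is injective on the orbit of `x₀`. -/
theorem Submonoid.injOn_orbit_of_mul_left_cancel {X : Type*} (x₀ : X)
    (M : Submonoid (Function.End X))
    (hΦ : Injective fun u : M => (u : Function.End X) x₀)
    (hc : ∀ u ∈ M, ∀ u₁ ∈ M, ∀ u₂ ∈ M, u * u₁ = u * u₂ → u₁ = u₂) {u : Function.End X}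
    (hu : u ∈ M) : Set.InjOn u (Set.range fun v : M => (v : Function.End X) x₀) := by
  rintro _ ⟨u₁, rfl⟩ _ ⟨u₂, rfl⟩ h
  have hprod : (⟨u, hu⟩ * u₁ : M) = ⟨u, hu⟩ * u₂ := hΦ h
  exact congrArg (· x₀) (hc u hu _ u₁.2 _ u₂.2 (congrArg Subtype.val hprod))

theorem stmt_5 {X : Type*} (x₀ : X) (M : Submonoid (Function.End X))
    (hΦ : Function.Bijective (fun u : M => (u : Function.End X) x₀)) :
    (∀ u ∈ M, ∀ u₁ ∈ M, ∀ u₂ ∈ M, u * u₁ = u * u₂ → u₁ = u₂) ↔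
      (∀ u ∈ M, Function.Injective u) := by
  constructor
  · intro hc u hu
    have hinjOn := M.injOn_orbit_of_mul_left_cancel x₀ hΦ.1 hc hu
    rw [hΦ.2.range_eq] at hinjOn
    exact Set.injOn_univ.mp hinjOn
  · intro hinj u hu u₁ _ u₂ _ h
    exact Function.End.injective_mul_left (hinj u hu) h
end

section
/- Let M be a commutative submonoid of Self(X) and x₀ ∈ X. Then the evaluation map Φ : M → X, u ↦ u(x₀), is a bijection if and only if the only M-invariant subset of X containing x₀ is X itself. -/
/-!
The orbit `{u x₀ | u ∈ M}` is the smallest `M`-invariant set containing `x₀`, so surjectivity of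
the evaluation map is equivalent to the minimality condition. For injectivity, commutativity makes
the equalizer `{x | u x = v x}` of two elements of `M` an `M`-invariant set; it contains `x₀` as
soon as `u x₀ = v x₀`, hence is all of `X`.
-/

section

variable {X : Type*} (M : Submonoid (Function.End X))

def IsInvariantSet (Y : Set X) : Prop :=
  ∀ u ∈ M, ∀ x ∈ Y, u x ∈ Y

theorem isInvariantSet_range_eval (x₀ : X) :
    IsInvariantSet M (Set.range fun u : M => (u : Function.End X) x₀) := by
  rintro w hw _ ⟨u, rfl⟩
  exact ⟨⟨w, hw⟩ * u, rfl⟩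

theorem range_eval_subset {x₀ : X} {Y : Set X} (hx₀ : x₀ ∈ Y) (hY : IsInvariantSet M Y) :
    (Set.range fun u : M => (u : Function.End X) x₀) ⊆ Y := by
  rintro _ ⟨u, rfl⟩
  exact hY u u.2 x₀ hx₀

theorem isInvariantSet_setOf_apply_eq {u v : Function.End X} (hu : ∀ w ∈ M, u * w = w * u)
    (hv : ∀ w ∈ M, v * w = w * v) : IsInvariantSet M {x | u x = v x} := by
  intro w hw x (hx : u x = v x)
  have hux : u (w x) = w (u x) := congrFun (hu w hw) x
  have hvx : v (w x) = w (v x) := congrFun (hv w hw) x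
  change u (w x) = v (w x)
  rw [hux, hvx, hx]

end

theorem stmt_6 {X : Type*} (x₀ : X) (M : Submonoid (Function.End X))
    (hcomm : ∀ u ∈ M, ∀ v ∈ M, u * v = v * u) :
    Function.Bijective (fun u : M => (u : Function.End X) x₀) ↔
      (∀ Y : Set X, x₀ ∈ Y → (∀ u ∈ M, ∀ x ∈ Y, u x ∈ Y) → Y = Set.univ) := by
  constructor
  · rintro ⟨-, hsurj⟩ Y hx₀ hY
    exact Set.eq_univ_of_univ_subset (hsurj.range_eq ▸ range_eval_subset M hx₀ hY)
  · intro hmin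
    refine ⟨fun u v huv => ?_, fun x => ?_⟩
    · have hequalizer := hmin _ huv <|
        isInvariantSet_setOf_apply_eq M (hcomm u u.2) (hcomm v v.2)
      exact Subtype.ext (funext (Set.eq_univ_iff_forall.1 hequalizer))
    · have horbit := hmin _ (Set.mem_range.2 ⟨1, rfl⟩) (isInvariantSet_range_eval M x₀)
      exact Set.eq_univ_iff_forall.1 horbit x
end

section
/- Let (X, f, x₀) be a minimal counting system, i.e., the only f-invariant subset of X containing x₀ is X itself. Then there exists a unique binary operation + on X such that (X, +, x₀) is a commutative monoid with unit x₀ satisfying f(x) = f(x₀) + x for all x ∈ X. -/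
/-! Minimality forces every element to be an iterate `f^[n] x₀`, and two iterates of `f` that agree
at `x₀` agree everywhere, since iterates commute. Hence `a + b := f^[n] b` for any `n` with
`f^[n] x₀ = a` is well defined; it is the transport of addition on `ℕ`, whence the monoid laws.
Conversely, any such monoid satisfies `f^[n] x₀ + b = f^[n] b` by induction on `n`. -/

namespace CountingSystem

variable {X : Type*} {f : X → X} {x₀ : X}

theorem exists_iterate_eq_of_minimal
    (hmin : ∀ Y : Set X, x₀ ∈ Y → (∀ x ∈ Y, f x ∈ Y) → Y = Set.univ) (x : X) :
    ∃ n : ℕ, f^[n] x₀ = x := by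
  have horbit : {y | ∃ n : ℕ, f^[n] x₀ = y} = Set.univ :=
    hmin _ ⟨0, rfl⟩ fun _ ⟨n, hn⟩ => ⟨n + 1, by rw [Function.iterate_succ_apply', hn]⟩
  exact (Set.ext_iff.mp horbit x).mpr trivial

theorem iterate_eq_iterate_of_iterate_eq (hsurj : ∀ x, ∃ n : ℕ, f^[n] x₀ = x) {m n : ℕ}
    (h : f^[m] x₀ = f^[n] x₀) (y : X) : f^[m] y = f^[n] y := by
  obtain ⟨k, rfl⟩ := hsurj y
  rw [Function.Commute.iterate_iterate_self f m k x₀,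
    Function.Commute.iterate_iterate_self f n k x₀, h]

noncomputable def add (hsurj : ∀ x, ∃ n : ℕ, f^[n] x₀ = x) (a b : X) : X :=
  f^[(hsurj a).choose] b

variable (hsurj : ∀ x, ∃ n : ℕ, f^[n] x₀ = x)

theorem add_iterate_left (n : ℕ) (b : X) : add hsurj (f^[n] x₀) b = f^[n] b :=
  iterate_eq_iterate_of_iterate_eq hsurj (hsurj _).choose_spec b

theorem add_iterate_iterate (m n : ℕ) :
    add hsurj (f^[m] x₀) (f^[n] x₀) = f^[m + n] x₀ := by
  rw [add_iterate_left, Function.iterate_add_apply]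

theorem add_assoc (a b c : X) :
    add hsurj (add hsurj a b) c = add hsurj a (add hsurj b c) := by
  obtain ⟨i, rfl⟩ := hsurj a
  obtain ⟨j, rfl⟩ := hsurj b
  obtain ⟨k, rfl⟩ := hsurj c
  simp only [add_iterate_iterate, Nat.add_assoc]

theorem add_comm (a b : X) : add hsurj a b = add hsurj b a := by
  obtain ⟨i, rfl⟩ := hsurj a
  obtain ⟨j, rfl⟩ := hsurj b
  rw [add_iterate_iterate, add_iterate_iterate, Nat.add_comm]

theorem zero_add (a : X) : add hsurj x₀ a = a :=
  add_iterate_left hsurj 0 a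

theorem add_zero (a : X) : add hsurj a x₀ = a := (hsurj a).choose_spec

theorem apply_eq_add (x : X) : f x = add hsurj (f x₀) x :=
  (add_iterate_left hsurj 1 x).symm

theorem op_iterate_left_eq_iterate (op : X → X → X)
    (assoc : ∀ a b c, op (op a b) c = op a (op b c)) (zero_op : ∀ a, op x₀ a = a)
    (hf : ∀ x, f x = op (f x₀) x) (n : ℕ) (b : X) : op (f^[n] x₀) b = f^[n] b := by
  induction n generalizing b with
  | zero => exact zero_op b
  | succ k ih =>
    rw [Function.iterate_succ_apply', hf, assoc, ih, ← hf, Function.iterate_succ_apply']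

end CountingSystem

theorem stmt_8 {X : Type*} (f : X → X) (x₀ : X)
    (hmin : ∀ Y : Set X, x₀ ∈ Y → (∀ x ∈ Y, f x ∈ Y) → Y = Set.univ) :
    ∃! op : X → X → X,
      (∀ a b c, op (op a b) c = op a (op b c)) ∧
      (∀ a b, op a b = op b a) ∧
      (∀ a, op x₀ a = a) ∧ (∀ a, op a x₀ = a) ∧
      (∀ x, f x = op (f x₀) x) := by
  have hsurj := CountingSystem.exists_iterate_eq_of_minimal hmin
  refine ⟨CountingSystem.add hsurj, ⟨CountingSystem.add_assoc hsurj,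
    CountingSystem.add_comm hsurj, CountingSystem.zero_add hsurj, CountingSystem.add_zero hsurj,
    CountingSystem.apply_eq_add hsurj⟩, ?_⟩
  rintro op ⟨assoc, -, zero_op, -, hf⟩
  funext a b
  obtain ⟨n, rfl⟩ := hsurj a
  rw [CountingSystem.op_iterate_left_eq_iterate op assoc zero_op hf,
    CountingSystem.add_iterate_left]
end

section
/- Let M be a commutative monoid generated by a single element a₀. Then there exists a unique biadditive map ⋄ : M × M → M such that a₀ ⋄ a₀ = a₀. Moreover, ⋄ is associative, commutative, and satisfies a₀ ⋄ a = a for all a ∈ M. -/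
/-!
Every element is a multiple `n • a₀`, and a relation `n • a₀ = m • a₀` forces `n • b = m • b`
for all `b` (write `b = k • a₀` and commute the scalars). Hence `(n • a₀) ⋄ b := n • b` is a well
defined biadditive map, and biadditivity together with `a₀ ⋄ a₀ = a₀` forces every such map to
have this form. Associativity, commutativity and the unit law then come from those of `ℕ`.
-/

def IsBiadditive {M N P : Type*} [Zero M] [Add M] [Zero N] [Add N] [Zero P] [Add P]
    (d : M → N → P) : Prop :=
  (∀ a, d a 0 = 0 ∧ ∀ b c, d a (b + c) = d a b + d a c) ∧
    (∀ b, d 0 b = 0 ∧ ∀ a a', d (a + a') b = d a b + d a' b)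

namespace IsBiadditive

variable {M N P : Type*} [AddMonoid M] [AddMonoid N] [AddMonoid P] {d : M → N → P}

theorem map_nsmul_left (hd : IsBiadditive d) (n : ℕ) (a : M) (b : N) :
    d (n • a) b = n • d a b :=
  map_nsmul (⟨⟨(d · b), (hd.2 b).1⟩, (hd.2 b).2⟩ : M →+ P) n a

theorem map_nsmul_right (hd : IsBiadditive d) (n : ℕ) (a : M) (b : N) :
    d a (n • b) = n • d a b :=
  map_nsmul (⟨⟨d a, (hd.1 a).1⟩, (hd.1 a).2⟩ : N →+ P) n b

end IsBiadditive

section Cyclic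

variable {M : Type*} [AddCommMonoid M] {a₀ : M}

theorem exists_nsmul_eq_of_closure_eq_top (hgen : AddSubmonoid.closure {a₀} = ⊤) (a : M) :
    ∃ n : ℕ, n • a₀ = a :=
  AddSubmonoid.mem_closure_singleton.1 (hgen ▸ AddSubmonoid.mem_top a)

theorem nsmul_eq_nsmul_of_nsmul_generator_eq (hgen : AddSubmonoid.closure {a₀} = ⊤)
    {n m : ℕ} (hnm : n • a₀ = m • a₀) (b : M) : n • b = m • b := by
  obtain ⟨k, rfl⟩ := exists_nsmul_eq_of_closure_eq_top hgen b
  rw [smul_comm n k, smul_comm m k, hnm]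

/-- Well defined by `nsmul_eq_nsmul_of_nsmul_generator_eq`, see `cyclicMul_eq_nsmul`. -/
noncomputable def cyclicMul (hgen : AddSubmonoid.closure {a₀} = ⊤) (a b : M) : M :=
  (exists_nsmul_eq_of_closure_eq_top hgen a).choose • b

variable (hgen : AddSubmonoid.closure {a₀} = ⊤)
include hgen

theorem cyclicMul_eq_nsmul {a : M} {n : ℕ} (ha : n • a₀ = a) (b : M) :
    cyclicMul hgen a b = n • b :=
  nsmul_eq_nsmul_of_nsmul_generator_eq hgen
    ((exists_nsmul_eq_of_closure_eq_top hgen a).choose_spec.trans ha.symm) b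

theorem isBiadditive_cyclicMul : IsBiadditive (cyclicMul hgen) := by
  refine ⟨fun a => ⟨smul_zero _, fun b c => smul_add _ _ _⟩, fun a => ⟨?_, fun b c => ?_⟩⟩
  · rw [cyclicMul_eq_nsmul hgen (zero_nsmul a₀), zero_nsmul]
  · obtain ⟨n, rfl⟩ := exists_nsmul_eq_of_closure_eq_top hgen b
    obtain ⟨m, rfl⟩ := exists_nsmul_eq_of_closure_eq_top hgen c
    rw [cyclicMul_eq_nsmul hgen (add_nsmul a₀ n m), add_nsmul,
      cyclicMul_eq_nsmul hgen rfl, cyclicMul_eq_nsmul hgen rfl]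

theorem cyclicMul_generator_generator : cyclicMul hgen a₀ a₀ = a₀ := by
  rw [cyclicMul_eq_nsmul hgen (one_nsmul a₀), one_nsmul]

namespace IsBiadditive

variable {d : M → M → M} (hd : IsBiadditive d) (hd₀ : d a₀ a₀ = a₀)
include hd hd₀

theorem apply_eq_nsmul {a : M} {n : ℕ} (ha : n • a₀ = a) (b : M) : d a b = n • b := by
  obtain ⟨m, rfl⟩ := exists_nsmul_eq_of_closure_eq_top hgen b
  rw [← ha, hd.map_nsmul_left, hd.map_nsmul_right, hd₀]

theorem eq_cyclicMul : d = cyclicMul hgen := by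
  funext a b
  obtain ⟨n, ha⟩ := exists_nsmul_eq_of_closure_eq_top hgen a
  rw [apply_eq_nsmul hgen hd hd₀ ha, cyclicMul_eq_nsmul hgen ha]

theorem assoc (a b c : M) : d (d a b) c = d a (d b c) := by
  obtain ⟨n, ha⟩ := exists_nsmul_eq_of_closure_eq_top hgen a
  obtain ⟨m, hb⟩ := exists_nsmul_eq_of_closure_eq_top hgen b
  have hab : (n * m) • a₀ = d a b := by
    rw [apply_eq_nsmul hgen hd hd₀ ha, ← hb, mul_nsmul']
  rw [apply_eq_nsmul hgen hd hd₀ hab, apply_eq_nsmul hgen hd hd₀ ha,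
    apply_eq_nsmul hgen hd hd₀ hb, mul_nsmul']

theorem comm (a b : M) : d a b = d b a := by
  obtain ⟨n, ha⟩ := exists_nsmul_eq_of_closure_eq_top hgen a
  obtain ⟨m, hb⟩ := exists_nsmul_eq_of_closure_eq_top hgen b
  rw [apply_eq_nsmul hgen hd hd₀ ha, apply_eq_nsmul hgen hd hd₀ hb, ← ha, ← hb, smul_comm]

theorem generator_apply (a : M) : d a₀ a = a := by
  rw [apply_eq_nsmul hgen hd hd₀ (one_nsmul a₀), one_nsmul]

end IsBiadditive

end Cyclic

theorem stmt_11 {M : Type*} [AddCommMonoid M] (a₀ : M)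
    (hgen : ∀ N : AddSubmonoid M, a₀ ∈ N → N = ⊤) :
    (∃! d : M → M → M,
      ((∀ a, d a 0 = 0 ∧ ∀ b c, d a (b + c) = d a b + d a c) ∧
       (∀ a, d 0 a = 0 ∧ ∀ b c, d (b + c) a = d b a + d c a)) ∧
      d a₀ a₀ = a₀) ∧
    (∀ d : M → M → M,
      (((∀ a, d a 0 = 0 ∧ ∀ b c, d a (b + c) = d a b + d a c) ∧
        (∀ a, d 0 a = 0 ∧ ∀ b c, d (b + c) a = d b a + d c a)) ∧
       d a₀ a₀ = a₀) →
      (∀ a b c, d (d a b) c = d a (d b c)) ∧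
      (∀ a b, d a b = d b a) ∧
      (∀ a, d a₀ a = a)) := by
  have hcl : AddSubmonoid.closure {a₀} = ⊤ := hgen _ (AddSubmonoid.subset_closure rfl)
  refine ⟨⟨cyclicMul hcl, ⟨isBiadditive_cyclicMul hcl, cyclicMul_generator_generator hcl⟩,
    fun d ⟨hd, hd₀⟩ => IsBiadditive.eq_cyclicMul hcl hd hd₀⟩, fun d ⟨hd, hd₀⟩ => ?_⟩
  exact ⟨IsBiadditive.assoc hcl hd hd₀, IsBiadditive.comm hcl hd hd₀,
    IsBiadditive.generator_apply hcl hd hd₀⟩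
end

section
/- Let M, N be commutative monoids and (a_s)_{s ∈ S} a family generating M. Suppose for each s ∈ S there exist monoid homomorphisms λ_s, λ'_s : M → N such that λ_s(a_t) = λ'_t(a_s) for all s, t ∈ S. Then there exists a unique biadditive map ⋄ : M × M → N such that a_s ⋄ a_t = λ_s(a_t) for all s, t ∈ S. -/
/-!
Currying identifies biadditive maps with homomorphisms `M →+ (M →+ N)`, and a homomorphism out
of `M` is determined by its values on the generators, which gives uniqueness. For existence we
need, for every `x : M`, a homomorphism `F x : M →+ N` with `F x (a t) = λ'_t x`. The `x` for
which such an `F x` exists form a submonoid, and the symmetry hypothesis says that `F (a s) := λ_s`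
works, so this submonoid is all of `M`. Since `F x` is unique, `x ↦ F x` is additive.
-/

namespace AddMonoidHom

variable {M N : Type*} [AddCommMonoid M] [AddCommMonoid N]

theorem eq_of_apply_eq_of_closure_range {S : Type*} {a : S → M}
    (hcl : AddSubmonoid.closure (Set.range a) = ⊤) {f g : M →+ N} (h : ∀ s, f (a s) = g (a s)) :
    f = g :=
  eq_of_eqOn_denseM hcl (Set.forall_mem_range.2 h)

theorem exists_comp_eq_of_injective {B C : Type*} [AddCommMonoid B] [AddCommMonoid C]
    {s : Set M} (hs : AddSubmonoid.closure s = ⊤) {R : B →+ C} (hR : Function.Injective R)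
    (Φ : M →+ C) (hΦ : ∀ x ∈ s, Φ x ∈ mrange R) : ∃ F : M →+ B, R.comp F = Φ := by
  have hrange : ∀ x, ∃ y, R y = Φ x := by
    intro x
    have hle : AddSubmonoid.closure s ≤ (mrange R).comap Φ := AddSubmonoid.closure_le.2 hΦ
    exact mem_mrange.1 (hle (hs ▸ AddSubmonoid.mem_top x))
  choose F hF using hrange
  refine ⟨{ toFun := F, map_zero' := hR ?_, map_add' := fun x y => hR ?_ }, ext hF⟩
  · simp only [hF, map_zero]
  · simp only [hF, map_add]

def ofBiadditive (d : M → M → N) (hzero_right : ∀ x, d x 0 = 0)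
    (hadd_right : ∀ x b c, d x (b + c) = d x b + d x c) (hzero_left : ∀ y, d 0 y = 0)
    (hadd_left : ∀ y b c, d (b + c) y = d b y + d c y) : M →+ M →+ N where
  toFun x := ⟨⟨d x, hzero_right x⟩, hadd_right x⟩
  map_zero' := ext hzero_left
  map_add' b c := ext fun y => hadd_left y b c

end AddMonoidHom

open AddMonoidHom

theorem stmt_13 {M N : Type*} [AddCommMonoid M] [AddCommMonoid N] {S : Type*}
    (a : S → M)
    (hgen : ∀ P : AddSubmonoid M, (∀ s, a s ∈ P) → P = ⊤)
    (lam lam' : S → (M →+ N))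
    (h : ∀ s t, lam s (a t) = lam' t (a s)) :
    ∃! d : M → M → N,
      ((∀ x, d x 0 = 0 ∧ ∀ b c, d x (b + c) = d x b + d x c) ∧
       (∀ x, d 0 x = 0 ∧ ∀ b c, d (b + c) x = d b x + d c x)) ∧
      (∀ s t, d (a s) (a t) = lam s (a t)) := by
  have hcl : AddSubmonoid.closure (Set.range a) = ⊤ :=
    hgen _ fun s => AddSubmonoid.subset_closure (Set.mem_range_self s)
  let restrict : (M →+ N) →+ (S → N) := pi fun t => eval (a t)
  have hrestrict : Function.Injective restrict := fun f g hfg =>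
    eq_of_apply_eq_of_closure_range hcl fun t => congrFun hfg t
  obtain ⟨F, hF⟩ := exists_comp_eq_of_injective hcl hrestrict (pi lam') <| by
    rintro _ ⟨s, rfl⟩
    exact ⟨lam s, funext (h s)⟩
  have hFa : ∀ s, F (a s) = lam s := fun s => eq_of_apply_eq_of_closure_range hcl fun t =>
    (congrFun (DFunLike.congr_fun hF (a s)) t).trans (h s t).symm
  refine ⟨fun x y => F x y, ⟨⟨fun x => ⟨map_zero _, map_add _⟩, fun y =>
    ⟨DFunLike.congr_fun (map_zero F) y, fun b c => DFunLike.congr_fun (map_add F b c) y⟩⟩,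
    fun s t => DFunLike.congr_fun (hFa s) (a t)⟩, ?_⟩
  rintro d ⟨⟨hright, hleft⟩, hd⟩
  have hdF : ofBiadditive d (hright · |>.1) (hright · |>.2) (hleft · |>.1) (hleft · |>.2) = F :=
    eq_of_apply_eq_of_closure_range hcl fun s => eq_of_apply_eq_of_closure_range hcl fun t =>
      (hd s t).trans (DFunLike.congr_fun (hFa s) (a t)).symm
  funext x y
  exact DFunLike.congr_fun (DFunLike.congr_fun hdF x) y
end

section
/- Let (X, f, x₀) be a minimal counting system with associated monoid operation +. Then for all x₁, x₂ ∈ X there exists x ∈ X such that either x₁ = x + x₂ or x₂ = x + x₁. -/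
/-!
Minimality makes every element an iterate `f^[n] x₀`, and the identity `f x = f x₀ + x` iterates
to `f^[k] x = f^[k] x₀ + x`. Hence for `n ≤ m` the element `f^[m] x₀` is `f^[m - n] x₀ + f^[n] x₀`.
-/

theorem exists_iterate_eq_of_minimal {X : Type*} {f : X → X} {x₀ : X}
    (hmin : ∀ Y : Set X, x₀ ∈ Y → (∀ x ∈ Y, f x ∈ Y) → Y = Set.univ) (x : X) :
    ∃ n : ℕ, f^[n] x₀ = x := by
  have hrange : Set.range (fun n => f^[n] x₀) = Set.univ :=
    hmin _ ⟨0, rfl⟩ (by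
      rintro _ ⟨n, rfl⟩
      exact ⟨n + 1, Function.iterate_succ_apply' f n x₀⟩)
  exact Set.eq_univ_iff_forall.mp hrange x

section Iterate

variable {X : Type*} {f : X → X} {x₀ : X} {op : X → X → X}
  (hassoc : ∀ a b c, op (op a b) c = op a (op b c)) (hle : ∀ a, op x₀ a = a)
  (hstar : ∀ x, f x = op (f x₀) x)
include hassoc hle hstar

theorem iterate_apply_eq_op (k : ℕ) (x : X) : f^[k] x = op (f^[k] x₀) x := by
  induction k with
  | zero => exact (hle x).symm
  | succ k ih =>
    rw [Function.iterate_succ_apply', Function.iterate_succ_apply', ih,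
      hstar (op _ x), hstar (f^[k] x₀), hassoc]

theorem iterate_eq_op_iterate_sub {m n : ℕ} (h : n ≤ m) :
    f^[m] x₀ = op (f^[m - n] x₀) (f^[n] x₀) := by
  rw [← iterate_apply_eq_op hassoc hle hstar, ← Function.iterate_add_apply, Nat.sub_add_cancel h]

end Iterate

theorem stmt_17_general {X : Type*} (f : X → X) (x₀ : X)
    (hmin : ∀ Y : Set X, x₀ ∈ Y → (∀ x ∈ Y, f x ∈ Y) → Y = Set.univ)
    (op : X → X → X)
    (hassoc : ∀ a b c, op (op a b) c = op a (op b c))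
    (hle : ∀ a, op x₀ a = a)
    (hstar : ∀ x, f x = op (f x₀) x) :
    ∀ x₁ x₂ : X, ∃ x : X, x₁ = op x x₂ ∨ x₂ = op x x₁ := by
  intro x₁ x₂
  obtain ⟨m, rfl⟩ := exists_iterate_eq_of_minimal hmin x₁
  obtain ⟨n, rfl⟩ := exists_iterate_eq_of_minimal hmin x₂
  rcases le_total n m with h | h
  · exact ⟨_, Or.inl (iterate_eq_op_iterate_sub hassoc hle hstar h)⟩
  · exact ⟨_, Or.inr (iterate_eq_op_iterate_sub hassoc hle hstar h)⟩

theorem stmt_17 {X : Type*} (f : X → X) (x₀ : X)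
    (hmin : ∀ Y : Set X, x₀ ∈ Y → (∀ x ∈ Y, f x ∈ Y) → Y = Set.univ)
    (op : X → X → X)
    (hassoc : ∀ a b c, op (op a b) c = op a (op b c))
    (hcomm : ∀ a b, op a b = op b a)
    (hle : ∀ a, op x₀ a = a) (hre : ∀ a, op a x₀ = a)
    (hstar : ∀ x, f x = op (f x₀) x) :
    ∀ x₁ x₂ : X, ∃ x : X, x₁ = op x x₂ ∨ x₂ = op x x₁ :=
  stmt_17_general f x₀ hmin op hassoc hle hstar
end
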